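/- Let {A_t : t ∈ ℕ-indexed by the chain p^0 ⊂ p^1 ⊂ … ⊂ p^{N−1} in b^{<ℕ}} be measurable events with μ(A_{p^k}) ≥ ε for all k, where 0 < θ < ε ≤ 1 and N ≥ 1/(ε² − θ²). Then there exist 0 ≤ k₀ < k₁ < N and a strong subtree F of b^{<ℕ} of height 3 with F(0) = p^{k₀} and F(0)⌢_F p = p^{k₁}, such that μ(A_{F(0)} ∩ A_{F(0)⌢_F p}) ≥ θ². -/

import Mathlib

/-!
Let `f = ∑_{k<N} 1_{A(p^k)}`. Since `Var f ≥ 0`,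
`(Nε)² ≤ (∫ f)² ≤ ∫ f² = ∑_{k,l<N} μ(A(p^k) ∩ A(p^l))`, and if every off-diagonal term were
below `θ²` this would force `N(ε² - θ²) < 1`. So some `k₀ < k₁ < N` has
`μ(A(p^k₀) ∩ A(p^k₁)) ≥ θ²`.

With `r = p^k₀` and `w = p^(k₁-k₀-1)`, the tree `{r} ∪ {r j w} ∪ {r j w j'}` has `r p w = p^k₁`
as the `p`-successor of its root. Its nodes occupy three lengths, it contains the truncation of
each node to every smaller occupied length, and every node lies below one of top length; hence
its levels are determined by length and its maximal chains are the sets of nodes below a top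
node, which makes it a strong subtree of height 3.
-/

/-- Strict prefix relation on lists: the tree order on `b^{<ℕ}`. -/
def PLt {β : Type*} (s t : List β) : Prop := s <+: t ∧ s ≠ t

/-- The level of a node `t` in the tree `T ⊆ b^{<ℕ}`: the number of its strict
predecessors (strict prefixes) lying in `T`. -/
noncomputable def lvl {β : Type*} (T : Set (List β)) (t : List β) : ℕ :=
  {s ∈ T | PLt s t}.ncard

/-- `t` is an immediate successor of `s` in the tree `T`. -/
def ImmSuc {β : Type*} (T : Set (List β)) (s t : List β) : Prop :=
  s ∈ T ∧ t ∈ T ∧ PLt s t ∧ ¬∃ u ∈ T, PLt s u ∧ PLt u t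

/-- `T` is uniquely rooted: it has a node below all of its nodes. -/
def UniquelyRooted {β : Type*} (T : Set (List β)) : Prop :=
  ∃ r ∈ T, ∀ t ∈ T, r <+: t

/-- `C` is a maximal chain of the tree `T`. -/
def MaxChainIn {β : Type*} (T C : Set (List β)) : Prop :=
  C ⊆ T ∧ (∀ s ∈ C, ∀ t ∈ C, s <+: t ∨ t <+: s) ∧
    ∀ C', C ⊆ C' → C' ⊆ T → (∀ s ∈ C', ∀ t ∈ C', s <+: t ∨ t <+: s) → C' = C

/-- `T` is balanced with all maximal chains of cardinality `h`
(i.e. balanced and of height `h`). -/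
def BalancedOfHeight {β : Type*} (T : Set (List β)) (h : ℕ) : Prop :=
  ∀ C, MaxChainIn T C → C.Finite ∧ C.ncard = h

/-- Every level of `S` is a subset of some level of `T`. -/
def LevelsAligned {β : Type*} (T S : Set (List β)) : Prop :=
  ∀ s ∈ S, ∀ s' ∈ S, lvl S s = lvl S s' → lvl T s = lvl T s'

/-- For every non-maximal node `s` of `S` and every immediate successor `t` of `s`
in `T` there is a unique immediate successor `s'` of `s` in `S` with `t ≤ s'`. -/
def SuccCond {β : Type*} (T S : Set (List β)) : Prop :=
  ∀ s ∈ S, (∃ x ∈ S, PLt s x) → ∀ t, ImmSuc T s t → ∃! s', ImmSuc S s s' ∧ t <+: s'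

/-- `S` is a strong subtree of `T` of (finite) height `h`. -/
def IsStrongSubtreeFin {β : Type*} (T S : Set (List β)) (h : ℕ) : Prop :=
  S ⊆ T ∧ S.Nonempty ∧ UniquelyRooted S ∧ BalancedOfHeight S h ∧
    LevelsAligned T S ∧ SuccCond T S

/-- `S` is a strong subtree of `T` of infinite height (uniquely rooted, balanced with
all maximal chains infinite, levels of `S` inside levels of `T`, successor condition). -/
def IsStrongSubtreeInf {β : Type*} (T S : Set (List β)) : Prop :=
  S ⊆ T ∧ S.Nonempty ∧ UniquelyRooted S ∧ (∀ s ∈ S, ∃ x ∈ S, PLt s x) ∧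
    LevelsAligned T S ∧ SuccCond T S

/-- `r` is the root of `S`. -/
def IsRoot {β : Type*} (S : Set (List β)) (r : List β) : Prop :=
  r ∈ S ∧ ∀ x ∈ S, r <+: x

/-- `v` is the immediate successor of `u` in `S` in direction `p`, i.e. the unique
immediate successor of `u` in `S` extending `u⌢p`. -/
def DirSucc {β : Type*} (S : Set (List β)) (u : List β) (p : β) (v : List β) : Prop :=
  ImmSuc S u v ∧ (u ++ [p]) <+: v

open MeasureTheory
open Finset

section SecondMoment

variable {Ω ι : Type*} [MeasurableSpace Ω] {μ : Measure Ω} {s : Finset ι} {A : ι → Set Ω}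

lemma integral_sum_indicator_one [IsFiniteMeasure μ] (hA : ∀ i ∈ s, MeasurableSet (A i)) :
    ∫ ω, (∑ i ∈ s, (A i).indicator 1) ω ∂μ = ∑ i ∈ s, μ.real (A i) := by
  simp only [Finset.sum_apply]
  rw [integral_finsetSum _ fun i hi => (integrable_const 1).indicator (hA i hi)]
  exact sum_congr rfl fun i hi => integral_indicator_one (hA i hi)

lemma sq_sum_measureReal_le_sum_sum_measureReal_inter [IsProbabilityMeasure μ]
    (hA : ∀ i ∈ s, MeasurableSet (A i)) :
    (∑ i ∈ s, μ.real (A i)) ^ 2 ≤ ∑ i ∈ s, ∑ j ∈ s, μ.real (A i ∩ A j) := by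
  set f : Ω → ℝ := ∑ i ∈ s, (A i).indicator 1
  have hf : MemLp f 2 μ :=
    memLp_finsetSum' _ fun i hi => (memLp_const 1).indicator (hA i hi)
  have hf_sq : f ^ 2 = ∑ ij ∈ s ×ˢ s, (A ij.1 ∩ A ij.2).indicator 1 := by
    simp only [f, sq, sum_mul_sum, sum_product, Set.inter_indicator_one]
  have hvar := ProbabilityTheory.variance_nonneg f μ
  rwa [ProbabilityTheory.variance_eq_sub hf, sub_nonneg, hf_sq,
    integral_sum_indicator_one fun ij hij => (hA _ (mem_product.1 hij).1).inter
      (hA _ (mem_product.1 hij).2), integral_sum_indicator_one hA, sum_product] at hvar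

lemma exists_ne_le_measureReal_inter [IsProbabilityMeasure μ] {θ ε : ℝ} (hθ : 0 < θ)
    (hε : 0 ≤ ε) (hs : 1 ≤ #s * (ε ^ 2 - θ ^ 2)) (hA : ∀ i ∈ s, MeasurableSet (A i))
    (hAε : ∀ i ∈ s, ε ≤ μ.real (A i)) :
    ∃ i ∈ s, ∃ j ∈ s, i ≠ j ∧ θ ^ 2 ≤ μ.real (A i ∩ A j) := by
  classical
  by_contra! hsmall
  have hpair : ∀ i ∈ s, ∀ j ∈ s,
      μ.real (A i ∩ A j) ≤ θ ^ 2 + if i = j then 1 - θ ^ 2 else 0 := by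
    intro i hi j hj
    split_ifs with hij
    · simp [measureReal_le_one]
    · simpa using (hsmall i hi j hj hij).le
  have hlower : #s * ε ≤ ∑ i ∈ s, μ.real (A i) := by
    simpa using card_nsmul_le_sum s _ ε hAε
  have hupper : ∑ i ∈ s, ∑ j ∈ s, μ.real (A i ∩ A j) ≤ #s * #s * θ ^ 2 + #s * (1 - θ ^ 2) :=
    calc _ ≤ ∑ i ∈ s, ∑ j ∈ s, (θ ^ 2 + if i = j then 1 - θ ^ 2 else 0) :=
          sum_le_sum fun i hi => sum_le_sum fun j hj => hpair i hi j hj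
      _ = _ := by
        simp only [sum_add_distrib, sum_const, nsmul_eq_mul, sum_ite_eq, sum_ite_mem, inter_self]
        ring
  have hn : (0 : ℝ) < #s := by
    by_contra! h
    nlinarith
  have := (pow_le_pow_left₀ (by positivity) hlower 2).trans
    ((sq_sum_measureReal_le_sum_sum_measureReal_inter hA).trans hupper)
  nlinarith [mul_le_mul_of_nonneg_left hs hn.le, mul_pos hn (pow_pos hθ 2)]

end SecondMoment

section Levels

variable {β : Type*}

lemma plt_iff {s t : List β} : PLt s t ↔ s <+: t ∧ s.length < t.length :=
  ⟨fun h => ⟨h.1, lt_of_le_of_ne h.1.length_le fun he => h.2 (h.1.eq_of_length he)⟩,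
    fun h => ⟨h.1, by rintro rfl; exact lt_irrefl _ h.2⟩⟩

lemma length_injOn_prefixes (y : List β) : Set.InjOn List.length {z | z <+: y} := by
  intro z₁ h₁ z₂ h₂ he
  rw [List.prefix_iff_eq_take.1 h₁, List.prefix_iff_eq_take.1 h₂, he]

lemma lvl_eq_ncard_image_length (T : Set (List β)) (t : List β) :
    lvl T t = (List.length '' {s ∈ T | PLt s t}).ncard :=
  (((length_injOn_prefixes t).mono fun _ h => h.2.1).ncard_image).symm

lemma lvl_univ (t : List β) : lvl Set.univ t = t.length := by
  suffices List.length '' {s ∈ Set.univ | PLt s t} = Set.Iio t.length by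
    rw [lvl_eq_ncard_image_length, this, Set.ncard_Iio_nat]
  ext n
  constructor
  · rintro ⟨s, ⟨-, hs⟩, rfl⟩
    exact (plt_iff.1 hs).2
  · intro (hn : n < t.length)
    exact ⟨t.take n, ⟨trivial, plt_iff.2 ⟨List.take_prefix _ _, by grind⟩⟩, by grind⟩

lemma ImmSuc.exists_eq_concat_of_univ {s t : List β} (h : ImmSuc Set.univ s t) :
    ∃ a, t = s ++ [a] := by
  obtain ⟨-, -, hst, hgap⟩ := h
  obtain ⟨w, rfl⟩ := hst.1
  match w with
  | [] => exact absurd (List.append_nil s).symm hst.2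
  | [a] => exact ⟨a, rfl⟩
  | a :: c :: w =>
    exact absurd ⟨s ++ [a], trivial, plt_iff.2 ⟨⟨[a], rfl⟩, by simp⟩,
      plt_iff.2 ⟨⟨c :: w, by simp⟩, by simp⟩⟩ hgap

lemma MaxChainIn.mem_of_forall_comparable {T C : Set (List β)} (hC : MaxChainIn T C)
    {x : List β} (hx : x ∈ T) (hcomp : ∀ c ∈ C, c <+: x ∨ x <+: c) : x ∈ C := by
  obtain ⟨hCT, hchain, hmax⟩ := hC
  have hins : insert x C = C := by
    refine hmax _ (Set.subset_insert x C) (Set.insert_subset hx hCT) ?_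
    rintro s (rfl | hs) t (rfl | ht)
    · exact Or.inl (List.prefix_refl _)
    · exact (hcomp t ht).symm
    · exact hcomp s hs
    · exact hchain s hs t ht
  exact hins ▸ Set.mem_insert x C

lemma card_filter_lt_strictMonoOn (L : Finset ℕ) :
    StrictMonoOn (fun n => #{ℓ ∈ L | ℓ < n}) L := by
  intro m hm n _ hmn
  refine Finset.card_lt_card (Finset.ssubset_iff_of_subset ?_ |>.2 ⟨m, ?_, ?_⟩)
  · intro ℓ
    simp only [mem_filter]
    exact And.imp_right (·.trans hmn)
  · simpa [hmn] using hm
  · simp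

structure IsLeveled (L : Finset ℕ) (S : Set (List β)) : Prop where
  length_mem : ∀ x ∈ S, x.length ∈ L
  exists_prefix : ∀ x ∈ S, ∀ ℓ ∈ L, ℓ ≤ x.length → ∃ z ∈ S, z <+: x ∧ z.length = ℓ
  exists_top : ∀ x ∈ S, ∃ y ∈ S, x <+: y ∧ ∀ ℓ ∈ L, ℓ ≤ y.length

namespace IsLeveled

variable {L : Finset ℕ} {S : Set (List β)}

lemma lvl_eq (hS : IsLeveled L S) {t : List β} (ht : t ∈ S) :
    lvl S t = #{ℓ ∈ L | ℓ < t.length} := by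
  suffices List.length '' {s ∈ S | PLt s t} = ↑({ℓ ∈ L | ℓ < t.length} : Finset ℕ) by
    rw [lvl_eq_ncard_image_length, this, Set.ncard_coe_finset]
  ext ℓ
  simp only [Set.mem_image, Set.mem_ofPred_eq, Finset.coe_filter]
  constructor
  · rintro ⟨s, ⟨hs, hst⟩, rfl⟩
    exact ⟨hS.length_mem s hs, (plt_iff.1 hst).2⟩
  · rintro ⟨hℓ, hlt⟩
    obtain ⟨z, hz, hzt, rfl⟩ := hS.exists_prefix t ht ℓ hℓ hlt.le
    exact ⟨z, ⟨hz, plt_iff.2 ⟨hzt, hlt⟩⟩, rfl⟩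

lemma levelsAligned_univ (hS : IsLeveled L S) : LevelsAligned Set.univ S := by
  intro s hs s' hs' h
  rw [hS.lvl_eq hs, hS.lvl_eq hs'] at h
  rw [lvl_univ, lvl_univ]
  exact (card_filter_lt_strictMonoOn L).injOn (hS.length_mem s hs) (hS.length_mem s' hs') h

lemma image_length_prefixes (hS : IsLeveled L S) {y : List β}
    (hy : y ∈ S) (htop : ∀ ℓ ∈ L, ℓ ≤ y.length) :
    List.length '' {z ∈ S | z <+: y} = L := by
  ext ℓ
  constructor
  · rintro ⟨z, ⟨hz, -⟩, rfl⟩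
    exact hS.length_mem z hz
  · intro hℓ
    obtain ⟨z, hz, hzy, rfl⟩ := hS.exists_prefix y hy ℓ hℓ (htop ℓ hℓ)
    exact ⟨z, ⟨hz, hzy⟩, rfl⟩

lemma eq_prefixes_of_maxChainIn (hS : IsLeveled L S) (hne : S.Nonempty) {C : Set (List β)}
    (hC : MaxChainIn S C) :
    ∃ y ∈ S, (∀ ℓ ∈ L, ℓ ≤ y.length) ∧ C = {z ∈ S | z <+: y} := by
  have ⟨hCS, hchain, _⟩ := hC
  have hinj : Set.InjOn List.length C := fun c hc d hd he =>
    (hchain c hc d hd).elim (·.eq_of_length he) fun h => (h.eq_of_length he.symm).symm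
  have hfin : C.Finite := Set.Finite.of_finite_image
    (L.finite_toSet.subset (Set.image_subset_iff.2 fun c hc => hS.length_mem c (hCS hc))) hinj
  have hCne : C.Nonempty := by
    rcases C.eq_empty_or_nonempty with rfl | h
    · obtain ⟨x, hx⟩ := hne
      exact ⟨x, hC.mem_of_forall_comparable hx fun c hc => hc.elim⟩
    · exact h
  obtain ⟨x, hxC, hxmax⟩ := Set.exists_max_image C List.length hfin hCne
  have hCx : ∀ c ∈ C, c <+: x := fun c hc =>
    (hchain c hc x hxC).elim id fun h => h.eq_of_length_le (hxmax c hc) ▸ List.prefix_refl _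
  obtain ⟨y, hy, hxy, htop⟩ := hS.exists_top x (hCS hxC)
  refine ⟨y, hy, htop, Set.Subset.antisymm (fun c hc => ⟨hCS hc, (hCx c hc).trans hxy⟩) ?_⟩
  rintro z ⟨hz, hzy⟩
  exact hC.mem_of_forall_comparable hz fun c hc =>
    List.prefix_or_prefix_of_prefix ((hCx c hc).trans hxy) hzy

lemma balancedOfHeight (hS : IsLeveled L S) (hne : S.Nonempty) :
    BalancedOfHeight S #L := by
  intro C hC
  obtain ⟨y, hy, htop, rfl⟩ := hS.eq_prefixes_of_maxChainIn hne hC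
  have hinj : Set.InjOn List.length {z ∈ S | z <+: y} :=
    (length_injOn_prefixes y).mono fun _ h => h.2
  have himage := hS.image_length_prefixes hy htop
  refine ⟨Set.Finite.of_finite_image (himage ▸ L.finite_toSet) hinj, ?_⟩
  rw [← hinj.ncard_image, himage, Set.ncard_coe_finset]

lemma immSuc_iff (hS : IsLeveled L S) {s t : List β} :
    ImmSuc S s t ↔ s ∈ S ∧ t ∈ S ∧ PLt s t ∧ ∀ ℓ ∈ L, ¬(s.length < ℓ ∧ ℓ < t.length) := by
  refine and_congr_right fun hs => and_congr_right fun ht => and_congr_right fun hst => ?_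
  constructor
  · rintro hgap ℓ hℓ ⟨hsℓ, hℓt⟩
    obtain ⟨u, hu, hut, rfl⟩ := hS.exists_prefix t ht ℓ hℓ hℓt.le
    exact hgap ⟨u, hu, plt_iff.2 ⟨List.prefix_of_prefix_length_le hst.1 hut hsℓ.le, hsℓ⟩,
      plt_iff.2 ⟨hut, hℓt⟩⟩
  · rintro hgap ⟨u, hu, hsu, hut⟩
    exact hgap u.length (hS.length_mem u hu) ⟨(plt_iff.1 hsu).2, (plt_iff.1 hut).2⟩

end IsLeveled

end Levels

section ThreeLevelTree

variable {β : Type*} (r w : List β)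

def threeLevelTree : Set (List β) :=
  {x | x = r ∨ (∃ j, x = r ++ j :: w) ∨ ∃ j j', x = (r ++ j :: w) ++ [j']}

def threeLevelTreeLengths : Finset ℕ :=
  {r.length, r.length + w.length + 1, r.length + w.length + 2}

lemma card_threeLevelTreeLengths : #(threeLevelTreeLengths r w) = 3 := by
  rw [threeLevelTreeLengths, card_eq_three]
  exact ⟨_, _, _, by omega, by omega, by omega, rfl⟩

lemma mem_threeLevelTreeLengths {ℓ : ℕ} : ℓ ∈ threeLevelTreeLengths r w ↔
    ℓ = r.length ∨ ℓ = r.length + w.length + 1 ∨ ℓ = r.length + w.length + 2 := by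
  simp [threeLevelTreeLengths]

lemma isRoot_threeLevelTree : IsRoot (threeLevelTree r w) r := by
  refine ⟨Or.inl rfl, ?_⟩
  rintro x (rfl | ⟨j, rfl⟩ | ⟨j, j', rfl⟩)
  · exact List.prefix_refl _
  · exact List.prefix_append r _
  · exact (List.prefix_append r _).trans (List.prefix_append _ _)

lemma isLeveled_threeLevelTree [Nonempty β] :
    IsLeveled (threeLevelTreeLengths r w) (threeLevelTree r w) where
  length_mem := by
    rintro x (rfl | ⟨j, rfl⟩ | ⟨j, j', rfl⟩) <;>
      simp only [mem_threeLevelTreeLengths, List.length_append, List.length_cons, List.length_nil,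
        true_or] <;> omega
  exists_prefix := by
    rintro x hx ℓ hℓ hle
    rw [mem_threeLevelTreeLengths] at hℓ
    rcases hℓ with rfl | rfl | rfl
    · exact ⟨r, (isRoot_threeLevelTree r w).1, (isRoot_threeLevelTree r w).2 x hx, rfl⟩
    · rcases hx with rfl | ⟨j, rfl⟩ | ⟨j, j', rfl⟩
      · omega
      · exact ⟨_, Or.inr (Or.inl ⟨j, rfl⟩), List.prefix_refl _, by simp +arith⟩
      · exact ⟨_, Or.inr (Or.inl ⟨j, rfl⟩), List.prefix_append _ _, by simp +arith⟩
    · rcases hx with rfl | ⟨j, rfl⟩ | ⟨j, j', rfl⟩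
      · omega
      · simp only [List.length_append, List.length_cons] at hle
        omega
      · exact ⟨_, Or.inr (Or.inr ⟨j, j', rfl⟩), List.prefix_refl _, by simp +arith⟩
  exists_top := by
    obtain ⟨a⟩ := ‹Nonempty β›
    have htop : ∀ j j', ∀ ℓ ∈ threeLevelTreeLengths r w, ℓ ≤ ((r ++ j :: w) ++ [j']).length := by
      simp only [mem_threeLevelTreeLengths, List.length_append, List.length_cons, List.length_nil]
      omega
    rintro x (rfl | ⟨j, rfl⟩ | ⟨j, j', rfl⟩)
    · exact ⟨_, Or.inr (Or.inr ⟨a, a, rfl⟩),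
        (List.prefix_append _ _).trans (List.prefix_append _ _), htop a a⟩
    · exact ⟨_, Or.inr (Or.inr ⟨j, a, rfl⟩), List.prefix_append _ _, htop j a⟩
    · exact ⟨_, Or.inr (Or.inr ⟨j, j', rfl⟩), List.prefix_refl _, htop j j'⟩

variable [Nonempty β]

lemma immSuc_root_threeLevelTree (a : β) : ImmSuc (threeLevelTree r w) r (r ++ a :: w) := by
  rw [(isLeveled_threeLevelTree r w).immSuc_iff]
  refine ⟨(isRoot_threeLevelTree r w).1, Or.inr (Or.inl ⟨a, rfl⟩),
    plt_iff.2 ⟨List.prefix_append _ _, by simp⟩, ?_⟩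
  simp only [mem_threeLevelTreeLengths, List.length_append, List.length_cons]
  omega

lemma immSuc_middle_threeLevelTree (j a : β) :
    ImmSuc (threeLevelTree r w) (r ++ j :: w) ((r ++ j :: w) ++ [a]) := by
  rw [(isLeveled_threeLevelTree r w).immSuc_iff]
  refine ⟨Or.inr (Or.inl ⟨j, rfl⟩), Or.inr (Or.inr ⟨j, a, rfl⟩),
    plt_iff.2 ⟨List.prefix_append _ _, by simp⟩, ?_⟩
  simp only [mem_threeLevelTreeLengths, List.length_append, List.length_cons, List.length_nil]
  omega

lemma succCond_threeLevelTree : SuccCond Set.univ (threeLevelTree r w) := by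
  have hS := isLeveled_threeLevelTree r w
  rintro s hs ⟨x, hx, hsx⟩ t hst
  obtain ⟨a, rfl⟩ := hst.exists_eq_concat_of_univ
  rcases hs with hs | ⟨j, rfl⟩ | ⟨j, j', rfl⟩
  · subst s
    refine ⟨_, ⟨immSuc_root_threeLevelTree r w a, by simp⟩, ?_⟩
    rintro s' ⟨hs', ha⟩
    obtain ⟨-, hs'T, hplt, hgap⟩ := hS.immSuc_iff.1 hs'
    rcases hs'T with hs' | ⟨j, rfl⟩ | ⟨j, j', rfl⟩
    · exact absurd hs'.symm hplt.2
    · simp only [List.prefix_append_right_inj, List.cons_prefix_cons] at ha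
      rw [ha.1]
    · exact absurd ⟨by omega, by simp +arith⟩
        (hgap (r.length + w.length + 1) (by simp [mem_threeLevelTreeLengths]))
  · refine ⟨_, ⟨immSuc_middle_threeLevelTree r w j a, List.prefix_refl _⟩, ?_⟩
    rintro s' ⟨hs', ha⟩
    have hlen := hS.length_mem s' hs'.2.1
    have hlt := (plt_iff.1 hs'.2.2.1).2
    simp only [mem_threeLevelTreeLengths, List.length_append, List.length_cons] at hlen hlt
    exact (ha.eq_of_length (by grind)).symm
  · have hlen := hS.length_mem x hx
    have hlt := (plt_iff.1 hsx).2
    simp only [mem_threeLevelTreeLengths, List.length_append, List.length_cons, List.length_nil]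
      at hlen hlt
    omega

lemma isStrongSubtreeFin_threeLevelTree : IsStrongSubtreeFin Set.univ (threeLevelTree r w) 3 := by
  have hS := isLeveled_threeLevelTree r w
  have hne : (threeLevelTree r w).Nonempty := ⟨r, (isRoot_threeLevelTree r w).1⟩
  refine ⟨Set.subset_univ _, hne, ⟨r, isRoot_threeLevelTree r w⟩, ?_,
    hS.levelsAligned_univ, succCond_threeLevelTree r w⟩
  simpa only [card_threeLevelTreeLengths] using hS.balancedOfHeight hne

lemma dirSucc_root_threeLevelTree (a : β) : DirSucc (threeLevelTree r w) r a (r ++ a :: w) :=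
  ⟨immSuc_root_threeLevelTree r w a, by simp⟩

end ThreeLevelTree

lemma exists_strongSubtree_replicate {β : Type*} (p : β) {k₀ k₁ : ℕ} (h : k₀ < k₁) :
    ∃ S : Set (List β), IsStrongSubtreeFin Set.univ S 3 ∧ IsRoot S (List.replicate k₀ p) ∧
      DirSucc S (List.replicate k₀ p) p (List.replicate k₁ p) := by
  have : Nonempty β := ⟨p⟩
  set r := List.replicate k₀ p
  set w := List.replicate (k₁ - k₀ - 1) p
  have hk₁ : List.replicate k₁ p = r ++ p :: w := by
    rw [← List.replicate_succ, ← List.replicate_add]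
    congr 1
    omega
  exact ⟨threeLevelTree r w, isStrongSubtreeFin_threeLevelTree r w, isRoot_threeLevelTree r w,
    hk₁ ▸ dirSucc_root_threeLevelTree r w p⟩

theorem stmt18_general {Ω : Type*} [MeasurableSpace Ω] (μ : Measure Ω)
    [IsProbabilityMeasure μ]
    (b : ℕ) (p : Fin b)
    (θ ε : ℝ) (hθ : 0 < θ) (hθε : θ < ε)
    (N : ℕ) (hN : 1 / (ε ^ 2 - θ ^ 2) ≤ (N : ℝ))
    (A : List (Fin b) → Set Ω)
    (hmeas : ∀ k < N, MeasurableSet (A (List.replicate k p)))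
    (hA : ∀ k < N, ε ≤ (μ (A (List.replicate k p))).toReal) :
    ∃ k₀ k₁, k₀ < k₁ ∧ k₁ < N ∧
      ∃ S : Set (List (Fin b)), IsStrongSubtreeFin Set.univ S 3 ∧
        IsRoot S (List.replicate k₀ p) ∧
        DirSucc S (List.replicate k₀ p) p (List.replicate k₁ p) ∧
        θ ^ 2 ≤ (μ (A (List.replicate k₀ p) ∩ A (List.replicate k₁ p))).toReal := by
  have hN' : 1 ≤ #(range N) * (ε ^ 2 - θ ^ 2) := by
    rwa [card_range, ← div_le_iff₀ (by nlinarith)]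
  obtain ⟨k, hk, l, hl, hkl, hθ₂⟩ := exists_ne_le_measureReal_inter
    (A := fun k => A (List.replicate k p)) hθ (hθ.trans hθε).le hN'
    (fun k hk => hmeas k (mem_range.1 hk)) (fun k hk => hA k (mem_range.1 hk))
  rcases hkl.lt_or_gt with h | h
  · obtain ⟨S, hS, hroot, hsucc⟩ := exists_strongSubtree_replicate p h
    exact ⟨k, l, h, mem_range.1 hl, S, hS, hroot, hsucc, hθ₂⟩
  · obtain ⟨S, hS, hroot, hsucc⟩ := exists_strongSubtree_replicate p h
    exact ⟨l, k, h, mem_range.1 hk, S, hS, hroot, hsucc, Set.inter_comm _ _ ▸ hθ₂⟩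

theorem stmt18 {Ω : Type*} [MeasurableSpace Ω] (μ : Measure Ω)
    [IsProbabilityMeasure μ]
    (b : ℕ) (hb : 2 ≤ b) (p : Fin b)
    (θ ε : ℝ) (hθ : 0 < θ) (hθε : θ < ε) (hε : ε ≤ 1)
    (N : ℕ) (hN : 1 / (ε ^ 2 - θ ^ 2) ≤ (N : ℝ))
    (A : List (Fin b) → Set Ω)
    (hmeas : ∀ k < N, MeasurableSet (A (List.replicate k p)))
    (hA : ∀ k < N, ε ≤ (μ (A (List.replicate k p))).toReal) :
    ∃ k₀ k₁, k₀ < k₁ ∧ k₁ < N ∧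
      ∃ S : Set (List (Fin b)), IsStrongSubtreeFin Set.univ S 3 ∧
        IsRoot S (List.replicate k₀ p) ∧
        DirSucc S (List.replicate k₀ p) p (List.replicate k₁ p) ∧
        θ ^ 2 ≤ (μ (A (List.replicate k₀ p) ∩ A (List.replicate k₁ p))).toReal :=
  stmt18_general μ b p θ ε hθ hθε N hN A hmeas hA
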